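/- Closed form for the class AII† edge integral: for every w ∈ ℝ, the integral ∫_w^∞ e^{v²} · erfc(√2·v) dv converges and equals −(√π/2) · erfc(√2·w) · erfi(w) + (1/√π) · ∫_0^{1/√2} e^{−2w²(1−u²)}/(1−u²) du. (Equivalently, the function g(v) := −(√π/4)·erfc(√2 v)·erfi(v) + (1/(2√π))·∫_0^{1/√2} e^{−2v²(1−u²)}/(1−u²) du satisfies g′(v) = −(1/2)·erfc(√2 v)·e^{v²} and g(+∞) = 0; the second summand is −i√π times Owen's T-function T(2v, i/√2) analytically continued to imaginary second argument.) -/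

import Mathlib

open MeasureTheory intervalIntegral

/-- The complementary error function `erfc(t) = (2/√π) ∫_t^∞ e^{−s²} ds`. -/
noncomputable def erfc (t : ℝ) : ℝ :=
  (2 / Real.sqrt Real.pi) * ∫ s in Set.Ioi t, Real.exp (-s ^ 2)

/-- The imaginary error function `erfi(w) = (2/√π) ∫_0^w e^{s²} ds`. -/
noncomputable def erfi (w : ℝ) : ℝ :=
  (2 / Real.sqrt Real.pi) * ∫ s in (0 : ℝ)..w, Real.exp (s ^ 2)

/-!
The integrand is the derivative of `G(v) = (√π/2) erfc(√2 v) erfi(v) − (1/√π) I(2v)` with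
`I(x) = ∫_0^{1/√2} e^{−x²(1−u²)/2}/(1−u²) du`. Differentiating under the integral sign and
substituting `s = x u` gives `I'(x) = −e^{−x²/2} ∫_0^{x/√2} e^{s²/2} ds`, which at `x = 2v` is a
multiple of `e^{−2v²} erfi(v)` and cancels the term coming from `erfc'` in the product rule.
Both summands of `G` tend to `0` at `+∞` (`erfc(√2 v) ≤ 2e^{−2v²}`, `erfi(v) ≤ (2/√π) v e^{v²}`)
and the integrand is nonnegative, so it is integrable on `(w, ∞)` with integral `−G(w)`.
-/

open Real Set Filter Topology

lemma hasDerivAt_integral_Ioi {E : Type*} [NormedAddCommGroup E] [NormedSpace ℝ E]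
    [CompleteSpace E] {f : ℝ → E} (hf : Continuous f) (hfi : Integrable f) (t : ℝ) :
    HasDerivAt (fun t => ∫ x in Ioi t, f x) (-f t) t := by
  have h : (fun t => ∫ x in Ioi t, f x) = fun t => (∫ x in Ioi 0, f x) - ∫ x in 0..t, f x := by
    funext t
    rw [← integral_Ioi_sub_Ioi' hfi.integrableOn hfi.integrableOn, sub_sub_cancel]
  rw [h]
  exact (hf.integral_hasStrictDerivAt 0 t).hasDerivAt.const_sub _

lemma integrable_exp_neg_sq : Integrable fun s : ℝ => exp (-s ^ 2) := by
  simpa using integrable_exp_neg_mul_sq one_pos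

lemma hasDerivAt_erfc (t : ℝ) : HasDerivAt erfc (-(2 / √π * exp (-t ^ 2))) t := by
  rw [← mul_neg]
  exact (hasDerivAt_integral_Ioi (by fun_prop) integrable_exp_neg_sq t).const_mul (2 / √π)

lemma hasDerivAt_erfi (t : ℝ) : HasDerivAt erfi (2 / √π * exp (t ^ 2)) t :=
  ((continuous_exp.comp (continuous_pow 2)).integral_hasStrictDerivAt 0 t).hasDerivAt.const_mul _

lemma erfc_nonneg (t : ℝ) : 0 ≤ erfc t :=
  mul_nonneg (by positivity) (setIntegral_nonneg measurableSet_Ioi fun _ _ => (exp_pos _).le)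

lemma erfi_nonneg {v : ℝ} (hv : 0 ≤ v) : 0 ≤ erfi v :=
  mul_nonneg (by positivity) (integral_nonneg hv fun _ _ => (exp_pos _).le)

lemma integral_Ioi_exp_neg_sq_le {t : ℝ} (ht : 0 ≤ t) :
    ∫ s in Ioi t, exp (-s ^ 2) ≤ √π * exp (-t ^ 2) := by
  have hshift : Integrable fun s => exp (-t ^ 2) * exp (-(s - t) ^ 2) :=
    (integrable_exp_neg_sq.comp_sub_right t).const_mul _
  calc ∫ s in Ioi t, exp (-s ^ 2)
      ≤ ∫ s in Ioi t, exp (-t ^ 2) * exp (-(s - t) ^ 2) := by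
        refine setIntegral_mono_on integrable_exp_neg_sq.integrableOn hshift.integrableOn
          measurableSet_Ioi fun s hs => ?_
        rw [← exp_add, exp_le_exp]
        nlinarith [mem_Ioi.1 hs]
    _ ≤ ∫ s, exp (-t ^ 2) * exp (-(s - t) ^ 2) :=
        setIntegral_le_integral hshift (.of_forall fun _ => by positivity)
    _ = √π * exp (-t ^ 2) := by
        rw [MeasureTheory.integral_const_mul, integral_sub_right_eq_self (fun s => exp (-s ^ 2)),
          show (∫ s, exp (-s ^ 2)) = √π by simpa using integral_gaussian 1, mul_comm]

lemma erfc_le_two_mul_exp_neg_sq {t : ℝ} (ht : 0 ≤ t) : erfc t ≤ 2 * exp (-t ^ 2) := by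
  have := sqrt_pos.2 pi_pos
  calc erfc t ≤ 2 / √π * (√π * exp (-t ^ 2)) :=
        mul_le_mul_of_nonneg_left (integral_Ioi_exp_neg_sq_le ht) (by positivity)
    _ = 2 * exp (-t ^ 2) := by field_simp

lemma erfi_le_mul_exp_sq {v : ℝ} (hv : 0 ≤ v) : erfi v ≤ 2 / √π * (v * exp (v ^ 2)) := by
  refine mul_le_mul_of_nonneg_left ?_ (by positivity)
  calc ∫ s in 0..v, exp (s ^ 2) ≤ ∫ _ in 0..v, exp (v ^ 2) :=
        integral_mono_on hv
          ((by fun_prop : Continuous fun s : ℝ => exp (s ^ 2)).intervalIntegrable 0 v)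
          intervalIntegrable_const fun s hs => exp_le_exp.2 (by nlinarith [hs.1, hs.2])
    _ = v * exp (v ^ 2) := by simp

/-- With Owen's `T` at imaginary second argument, `T(x, ib) = (i / 2π) * owenTImag x b`. -/
noncomputable def owenTImag (x b : ℝ) : ℝ :=
  ∫ u in 0..b, exp (-(x ^ 2 * (1 - u ^ 2) / 2)) / (1 - u ^ 2)

lemma one_sub_sq_le_of_mem_uIcc {b u : ℝ} (hu : u ∈ uIcc 0 b) : 1 - b ^ 2 ≤ 1 - u ^ 2 := by
  have : |u| ≤ |b| := by simpa using abs_sub_left_of_mem_uIcc hu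
  linarith [sq_le_sq.2 this]

lemma one_sub_sq_pos_of_mem_uIcc {b u : ℝ} (hb : |b| < 1) (hu : u ∈ uIcc 0 b) :
    0 < 1 - u ^ 2 := by
  linarith [one_sub_sq_le_of_mem_uIcc hu, (sq_lt_one_iff_abs_lt_one b).2 hb]

lemma continuousOn_owenTImag_integrand {b : ℝ} (hb : |b| < 1) (x : ℝ) :
    ContinuousOn (fun u => exp (-(x ^ 2 * (1 - u ^ 2) / 2)) / (1 - u ^ 2)) (uIcc 0 b) :=
  ContinuousOn.div (by fun_prop) (by fun_prop) fun _ hu => (one_sub_sq_pos_of_mem_uIcc hb hu).ne'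

lemma hasDerivAt_owenTImag_integrand {u : ℝ} (hu : 1 - u ^ 2 ≠ 0) (x : ℝ) :
    HasDerivAt (fun x => exp (-(x ^ 2 * (1 - u ^ 2) / 2)) / (1 - u ^ 2))
      (-x * exp (-(x ^ 2 * (1 - u ^ 2) / 2))) x := by
  refine ((((hasDerivAt_pow 2 x).mul_const (1 - u ^ 2)).div_const 2).neg.exp.div_const
    (1 - u ^ 2)).congr_deriv ?_
  simp only [Pi.neg_apply]
  field_simp
  ring

lemma hasDerivAt_owenTImag_eq_integral {b : ℝ} (hb : |b| < 1) (x : ℝ) :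
    HasDerivAt (owenTImag · b) (∫ u in 0..b, -x * exp (-(x ^ 2 * (1 - u ^ 2) / 2))) x := by
  have hpos {u} (hu : u ∈ uIoc 0 b) := one_sub_sq_pos_of_mem_uIcc hb (uIoc_subset_uIcc hu)
  refine (hasDerivAt_integral_of_dominated_loc_of_deriv_le (bound := fun _ => |x| + 1)
    (F' := fun y u => -y * exp (-(y ^ 2 * (1 - u ^ 2) / 2)))
    (Metric.ball_mem_nhds x one_pos) (.of_forall fun y => ?_)
    (continuousOn_owenTImag_integrand hb x).intervalIntegrable
    (Continuous.aestronglyMeasurable (by fun_prop)) (.of_forall fun u hu y hy => ?_)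
    intervalIntegrable_const (.of_forall fun u hu y _ => ?_)).2
  · exact ((continuousOn_owenTImag_integrand hb y).mono uIoc_subset_uIcc).aestronglyMeasurable
      measurableSet_uIoc
  · have hy' : |y| ≤ |x| + 1 := by
      linarith [abs_sub_abs_le_abs_sub y x, (mem_ball_iff_norm.1 hy).le, Real.norm_eq_abs (y - x)]
    have hexp : exp (-(y ^ 2 * (1 - u ^ 2) / 2)) ≤ 1 :=
      exp_le_one_iff.2 (by nlinarith [sq_nonneg y, hpos hu])
    rw [norm_mul, norm_neg, Real.norm_of_nonneg (exp_pos _).le]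
    nlinarith [abs_nonneg y, exp_pos (-(y ^ 2 * (1 - u ^ 2) / 2)), Real.norm_eq_abs y]
  · exact hasDerivAt_owenTImag_integrand (hpos hu).ne' y

lemma hasDerivAt_owenTImag {b : ℝ} (hb : |b| < 1) (x : ℝ) :
    HasDerivAt (owenTImag · b) (-(exp (-x ^ 2 / 2) * ∫ s in 0..x * b, exp (s ^ 2 / 2))) x := by
  convert hasDerivAt_owenTImag_eq_integral hb x using 1
  have hsplit (u : ℝ) : -x * exp (-(x ^ 2 * (1 - u ^ 2) / 2)) =
      -(exp (-x ^ 2 / 2) * (x * exp ((x * u) ^ 2 / 2))) := by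
    rw [mul_left_comm, ← exp_add]; ring_nf
  have hsubst := smul_integral_comp_mul_left (a := 0) (b := b) (fun s => exp (s ^ 2 / 2)) x
  rw [mul_zero, smul_eq_mul] at hsubst
  rw [integral_congr fun u _ => hsplit u, intervalIntegral.integral_neg,
    intervalIntegral.integral_const_mul, intervalIntegral.integral_const_mul, hsubst]

lemma tendsto_owenTImag_atTop {b : ℝ} (hb : |b| < 1) :
    Tendsto (owenTImag · b) atTop (𝓝 0) := by
  have hc : 0 < 1 - b ^ 2 := by linarith [(sq_lt_one_iff_abs_lt_one b).2 hb]
  have hbound : Tendsto (fun x => exp (-(x ^ 2 * (1 - b ^ 2) / 2)) / (1 - b ^ 2) * |b - 0|)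
      atTop (𝓝 0) := by
    have : Tendsto (fun x : ℝ => -(x ^ 2 * (1 - b ^ 2) / 2)) atTop atBot :=
      tendsto_neg_atTop_atBot.comp
        (((tendsto_pow_atTop two_ne_zero).atTop_mul_const hc).atTop_div_const two_pos)
    simpa using ((tendsto_exp_atBot.comp this).div_const (1 - b ^ 2)).mul_const |b - 0|
  refine squeeze_zero_norm (fun x => norm_integral_le_of_norm_le_const fun u hu => ?_) hbound
  have hu := uIoc_subset_uIcc hu
  rw [norm_div, Real.norm_of_nonneg (exp_pos _).le,
    Real.norm_of_nonneg (one_sub_sq_pos_of_mem_uIcc hb hu).le]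
  exact div_le_div₀ (exp_pos _).le
    (exp_le_exp.2 (by nlinarith [one_sub_sq_le_of_mem_uIcc hu, sq_nonneg x])) hc
    (one_sub_sq_le_of_mem_uIcc hu)

lemma owenTImag_two_mul (v b : ℝ) :
    owenTImag (2 * v) b = ∫ u in 0..b, exp (-(2 * v ^ 2 * (1 - u ^ 2))) / (1 - u ^ 2) := by
  simp only [owenTImag]
  ring_nf

lemma integral_exp_sq_div_two_eq_erfi (v : ℝ) :
    ∫ s in 0..√2 * v, exp (s ^ 2 / 2) = √2 * (√π / 2 * erfi v) := by
  have hsubst := smul_integral_comp_mul_left (a := 0) (b := v) (fun s => exp (s ^ 2 / 2)) √2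
  have hsq : √2 ^ 2 = 2 := sq_sqrt zero_le_two
  simp only [mul_zero, smul_eq_mul, mul_pow, hsq] at hsubst
  have := sqrt_pos.2 pi_pos
  rw [← hsubst, erfi]
  field_simp

noncomputable def edgePrimitive (v : ℝ) : ℝ :=
  √π / 2 * (erfc (√2 * v) * erfi v) - 1 / √π * owenTImag (2 * v) (1 / √2)

lemma abs_one_div_sqrt_two_lt_one : |1 / √2| < 1 := by
  rw [abs_of_pos (by positivity), div_lt_one (by positivity), lt_sqrt zero_le_one]
  norm_num

lemma hasDerivAt_edgePrimitive (v : ℝ) :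
    HasDerivAt edgePrimitive (exp (v ^ 2) * erfc (√2 * v)) v := by
  have hsq : √2 ^ 2 = 2 := sq_sqrt zero_le_two
  have hpi := sqrt_pos.2 pi_pos
  have hT : HasDerivAt (fun x => owenTImag (2 * x) (1 / √2)) _ v :=
    (hasDerivAt_owenTImag abs_one_div_sqrt_two_lt_one (2 * v)).comp v
      ((hasDerivAt_id v).const_mul 2)
  rw [show 2 * v * (1 / √2) = √2 * v by field_simp; rw [hsq]; ring,
    integral_exp_sq_div_two_eq_erfi] at hT
  have hE : HasDerivAt (fun x => erfc (√2 * x)) _ v :=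
    (hasDerivAt_erfc (√2 * v)).comp v ((hasDerivAt_id v).const_mul √2)
  have hexp : -(2 * v) ^ 2 / 2 = -(√2 * v) ^ 2 := by rw [mul_pow, mul_pow, hsq]; ring
  refine (((hE.fun_mul (hasDerivAt_erfi v)).const_mul (√π / 2)).fun_sub
    (hT.const_mul (1 / √π))).congr_deriv ?_
  rw [hexp]
  field_simp
  ring

lemma erfc_sqrt_two_mul_mul_erfi_le {v : ℝ} (hv : 1 ≤ v) :
    erfc (√2 * v) * erfi v ≤ 4 / √π * (v * exp (-v)) := by
  have hv0 : 0 ≤ v := by linarith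
  have herfc : erfc (√2 * v) ≤ 2 * exp (-(2 * v ^ 2)) := by
    simpa [mul_pow] using erfc_le_two_mul_exp_neg_sq (t := √2 * v) (by positivity)
  calc erfc (√2 * v) * erfi v
      ≤ 2 * exp (-(2 * v ^ 2)) * (2 / √π * (v * exp (v ^ 2))) :=
        mul_le_mul herfc (erfi_le_mul_exp_sq hv0) (erfi_nonneg hv0) (by positivity)
    _ = 4 / √π * (v * exp (-v ^ 2)) := by
        rw [show -v ^ 2 = -(2 * v ^ 2) + v ^ 2 by ring, exp_add]; ring
    _ ≤ 4 / √π * (v * exp (-v)) := by gcongr; nlinarith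

lemma tendsto_erfc_sqrt_two_mul_mul_erfi :
    Tendsto (fun v => erfc (√2 * v) * erfi v) atTop (𝓝 0) := by
  refine squeeze_zero' ?_ ?_ (by simpa using
    (tendsto_pow_mul_exp_neg_atTop_nhds_zero 1).const_mul (4 / √π))
  · filter_upwards [eventually_ge_atTop 0] with v hv
    exact mul_nonneg (erfc_nonneg _) (erfi_nonneg hv)
  · filter_upwards [eventually_ge_atTop 1] with v hv
    exact erfc_sqrt_two_mul_mul_erfi_le hv

lemma tendsto_edgePrimitive_atTop : Tendsto edgePrimitive atTop (𝓝 0) := by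
  unfold edgePrimitive
  have hT := (tendsto_owenTImag_atTop abs_one_div_sqrt_two_lt_one).comp
    (tendsto_id.const_mul_atTop two_pos)
  simpa using (tendsto_erfc_sqrt_two_mul_mul_erfi.const_mul (√π / 2)).sub
    (hT.const_mul (1 / √π))

/-- Closed form for the class AII† edge integral: for every `w ∈ ℝ`,
`∫_w^∞ e^{v²} erfc(√2 v) dv` converges and equals
`−(√π/2) erfc(√2 w) erfi(w) + (1/√π) ∫_0^{1/√2} e^{−2w²(1−u²)}/(1−u²) du`. -/
theorem statement13 (w : ℝ) :
    IntegrableOn (fun v => Real.exp (v ^ 2) * erfc (Real.sqrt 2 * v)) (Set.Ioi w) volume ∧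
      (∫ v in Set.Ioi w, Real.exp (v ^ 2) * erfc (Real.sqrt 2 * v))
        = -(Real.sqrt Real.pi / 2) * erfc (Real.sqrt 2 * w) * erfi w +
            (1 / Real.sqrt Real.pi) *
              ∫ u in (0 : ℝ)..(1 / Real.sqrt 2),
                Real.exp (-(2 * w ^ 2 * (1 - u ^ 2))) / (1 - u ^ 2) := by
  have hderiv (v : ℝ) (_ : v ∈ Ici w) := hasDerivAt_edgePrimitive v
  have hnonneg (v : ℝ) (_ : v ∈ Ioi w) : 0 ≤ exp (v ^ 2) * erfc (√2 * v) :=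
    mul_nonneg (exp_pos _).le (erfc_nonneg _)
  refine ⟨integrableOn_Ioi_deriv_of_nonneg' hderiv hnonneg tendsto_edgePrimitive_atTop, ?_⟩
  rw [integral_Ioi_of_hasDerivAt_of_nonneg' hderiv hnonneg tendsto_edgePrimitive_atTop,
    edgePrimitive, owenTImag_two_mul]
  ring
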